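/- The polynomials I_n lie in the kernel of the first-order operator ν·∂_z + 2α·∂_w: for all n, ν·(∂_z I_n) + 2α·(∂_w I_n) = 0. -/
import Mathlib


open MvPolynomial

noncomputable def Ipoly (ν α ξ : ℂ) : ℕ → MvPolynomial (Fin 2) ℂ
  | 0 => 1
  | 1 => C ν * X 1 - C (2 * α) * X 0 - C ξ
  | (n + 2) => (C ν * X 1 - C (2 * α) * X 0 - C ξ) * Ipoly ν α ξ (n + 1)
      + C (2 * α * (n + 1)) * Ipoly ν α ξ n

theorem stmt14 (ν α ξ : ℂ) (n : ℕ) :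
    C ν * pderiv 0 (Ipoly ν α ξ n) + C (2 * α) * pderiv 1 (Ipoly ν α ξ n) = 0 := by
  induction n using Nat.strong_induction_on with
  | _ n ih =>
    match n with
    | 0 => simp [Ipoly]
    | 1 =>
      simp [Ipoly, pderiv_X]
      ring
    | (m + 2) =>
      have h1 := ih (m + 1) (by omega)
      have h0 := ih m (by omega)
      simp only [Ipoly, map_add, map_sub, map_mul, pderiv_mul, pderiv_X, pderiv_C, map_one, Derivation.map_one_eq_zero] at *
      simp only [Pi.single_eq_same, Pi.single_eq_of_ne (by decide : (1 : Fin 2) ≠ 0),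
        Pi.single_eq_of_ne (by decide : (0 : Fin 2) ≠ 1)]
      linear_combination (C ν * X 1 - C 2 * C α * X 0 - C ξ) * h1 + C 2 * C α * (C (m:ℂ) + 1) * h0
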